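/- Let z = |z'| with z' ∼ N(0, σ²). Then E[ (1/2)(z² + 1) erf(z/√2) + (z e^{−z²/2} − 2z)/√(2π) ] = ((σ² + 1) arctan σ)/π − σ/π. -/

import Mathlib

open MeasureTheory ProbabilityTheory Real

noncomputable def erf (t : ℝ) : ℝ := (2 / Real.sqrt π) * ∫ u in (0:ℝ)..t, Real.exp (-u ^ 2)

/-!
Writing the expectation as `E g(|z'|)`, folding the normal density onto `(0, ∞)` and
substituting `x = √2 σ y` turns it into `(2/√π) ∫₀^∞ e^{-y²} g(√2 σ y) dy`, a linear combination
of the odd Gaussian moments `∫₀^∞ y^{2k+1} e^{-b y²} = k! / (2 b^{k+1})` and of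
`I_k(c) = ∫₀^∞ y^{2k} erf(c y) e^{-y²}` for `k = 0, 1` and `c = σ`. Differentiating under the integral,
`I_k'(c) = (2/√π) ∫₀^∞ y^{2k+1} e^{-(1+c²) y²} = k! / (√π (1+c²)^{k+1})`, and `I_k(0) = 0`, so
`I_0(c) = arctan c / √π` and `I_1(c) = (arctan c + c / (1 + c²)) / (2√π)`.
-/

open Set Filter
open scoped Nat NNReal Interval

lemma integrableOn_pow_mul_exp_neg_mul_sq {b : ℝ} (hb : 0 < b) (n : ℕ) :
    IntegrableOn (fun x : ℝ => x ^ n * exp (-b * x ^ 2)) (Ioi 0) := by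
  simpa only [rpow_natCast] using integrableOn_rpow_mul_exp_neg_mul_sq hb (s := n)
    (neg_one_lt_zero.trans_le n.cast_nonneg)

lemma integral_pow_odd_mul_exp_neg_mul_sq {b : ℝ} (hb : 0 < b) (k : ℕ) :
    ∫ x in Ioi (0 : ℝ), x ^ (2 * k + 1) * exp (-b * x ^ 2) = k ! / (2 * b ^ (k + 1)) := by
  have hq : ((2 * k + 1 : ℕ) + 1 : ℝ) / 2 = (k : ℝ) + 1 := by push_cast; ring
  calc ∫ x in Ioi (0 : ℝ), x ^ (2 * k + 1) * exp (-b * x ^ 2)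
      = ∫ x in Ioi (0 : ℝ), x ^ ((2 * k + 1 : ℕ) : ℝ) * exp (-b * x ^ (2 : ℝ)) := by
        simp only [rpow_natCast, rpow_two]
    _ = b ^ (-((2 * k + 1 : ℕ) + 1 : ℝ) / 2) * (1 / 2) * Gamma (((2 * k + 1 : ℕ) + 1 : ℝ) / 2) :=
        integral_rpow_mul_exp_neg_mul_rpow two_pos (neg_one_lt_zero.trans_le (Nat.cast_nonneg _)) hb
    _ = k ! / (2 * b ^ (k + 1)) := by
        rw [neg_div, hq, Gamma_nat_eq_factorial, rpow_neg hb.le, ← Nat.cast_add_one, rpow_natCast]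
        field_simp

lemma integral_mul_exp_neg_mul_sq {b : ℝ} (hb : 0 < b) :
    ∫ x in Ioi (0 : ℝ), x * exp (-b * x ^ 2) = (2 * b)⁻¹ := by
  simpa using integral_pow_odd_mul_exp_neg_mul_sq hb 0

lemma hasDerivAt_erf (t : ℝ) : HasDerivAt erf (2 / √π * exp (-t ^ 2)) t := by
  have hc : Continuous fun u : ℝ => exp (-u ^ 2) := by fun_prop
  exact (intervalIntegral.integral_hasDerivAt_right (hc.intervalIntegrable 0 t)
    (hc.stronglyMeasurableAtFilter _ _) hc.continuousAt).const_mul _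

@[fun_prop]
lemma continuous_erf : Continuous erf :=
  continuous_iff_continuousAt.2 fun t => (hasDerivAt_erf t).continuousAt

@[simp]
lemma erf_zero : erf 0 = 0 := by simp [erf]

lemma abs_erf_le (t : ℝ) : |erf t| ≤ 2 / √π * |t| := by
  have hC : ∀ u ∈ Ι 0 t, ‖exp (-u ^ 2)‖ ≤ 1 := fun u _ => by
    rw [norm_of_nonneg (exp_pos _).le, exp_le_one_iff]; exact neg_nonpos.2 (sq_nonneg u)
  have := intervalIntegral.norm_integral_le_of_norm_le_const hC
  rw [erf, abs_mul, abs_of_nonneg (show 0 ≤ 2 / √π by positivity)]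
  exact mul_le_mul_of_nonneg_left (by simpa using this) (by positivity)

lemma norm_pow_mul_erf_mul_exp_le (n : ℕ) (c : ℝ) {x : ℝ} (hx : 0 ≤ x) :
    ‖x ^ n * erf (c * x) * exp (-x ^ 2)‖ ≤ 2 / √π * |c| * (x ^ (n + 1) * exp (-x ^ 2)) := by
  rw [norm_mul, norm_mul, norm_of_nonneg (pow_nonneg hx n), norm_of_nonneg (exp_pos _).le,
    norm_eq_abs]
  calc x ^ n * |erf (c * x)| * exp (-x ^ 2)
      ≤ x ^ n * (2 / √π * |c * x|) * exp (-x ^ 2) := by gcongr; exact abs_erf_le _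
    _ = 2 / √π * |c| * (x ^ (n + 1) * exp (-x ^ 2)) := by rw [abs_mul, abs_of_nonneg hx]; ring

lemma integrableOn_pow_mul_exp_neg_sq (n : ℕ) :
    IntegrableOn (fun x : ℝ => x ^ n * exp (-x ^ 2)) (Ioi 0) := by
  simpa using integrableOn_pow_mul_exp_neg_mul_sq one_pos n

lemma integrableOn_pow_mul_erf_mul_exp (n : ℕ) (c : ℝ) :
    IntegrableOn (fun x => x ^ n * erf (c * x) * exp (-x ^ 2)) (Ioi 0) :=
  ((integrableOn_pow_mul_exp_neg_sq (n + 1)).const_mul (2 / √π * |c|)).mono'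
    (by fun_prop)
    (ae_restrict_of_forall_mem measurableSet_Ioi fun _ hx =>
      norm_pow_mul_erf_mul_exp_le n c (le_of_lt hx))

lemma hasDerivAt_integral_pow_mul_erf_mul_exp (n : ℕ) (c : ℝ) :
    HasDerivAt (fun c => ∫ x in Ioi (0 : ℝ), x ^ n * erf (c * x) * exp (-x ^ 2))
      (2 / √π * ∫ x in Ioi (0 : ℝ), x ^ (n + 1) * exp (-(1 + c ^ 2) * x ^ 2)) c := by
  have hF' : ∀ x c, HasDerivAt (fun c => x ^ n * erf (c * x) * exp (-x ^ 2))
      (2 / √π * (x ^ (n + 1) * exp (-(1 + c ^ 2) * x ^ 2))) c := by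
    intro x c
    refine ((((hasDerivAt_erf (c * x)).comp c (hasDerivAt_mul_const x)).const_mul
      (x ^ n)).mul_const (exp (-x ^ 2))).congr_deriv ?_
    rw [show -(1 + c ^ 2) * x ^ 2 = -(c * x) ^ 2 + -x ^ 2 by ring, exp_add]
    ring
  have hF'_le : ∀ x c, 0 ≤ x → ‖2 / √π * (x ^ (n + 1) * exp (-(1 + c ^ 2) * x ^ 2))‖
      ≤ 2 / √π * (x ^ (n + 1) * exp (-x ^ 2)) := by
    intro x c hx
    rw [norm_of_nonneg (by positivity)]
    gcongr
    nlinarith [sq_nonneg (c * x)]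
  have key := hasDerivAt_integral_of_dominated_loc_of_deriv_le
    (μ := volume.restrict (Ioi 0)) (Metric.ball_mem_nhds c one_pos)
    (Eventually.of_forall fun c => (integrableOn_pow_mul_erf_mul_exp n c).aestronglyMeasurable)
    (integrableOn_pow_mul_erf_mul_exp n c) (by fun_prop)
    (ae_restrict_of_forall_mem measurableSet_Ioi fun x hx c _ => hF'_le x c (le_of_lt hx))
    ((integrableOn_pow_mul_exp_neg_sq (n + 1)).const_mul _)
    (ae_of_all _ fun x c _ => hF' x c)
  rw [← integral_const_mul]
  exact key.2

lemma integral_pow_mul_erf_mul_exp_eq_of_hasDerivAt (k : ℕ) {G : ℝ → ℝ}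
    (hG : ∀ c, HasDerivAt G (k ! / (√π * (1 + c ^ 2) ^ (k + 1))) c) (hG₀ : G 0 = 0) (c : ℝ) :
    ∫ x in Ioi (0 : ℝ), x ^ (2 * k) * erf (c * x) * exp (-x ^ 2) = G c := by
  have hderiv : ∀ c, HasDerivAt
      (fun c => ∫ x in Ioi (0 : ℝ), x ^ (2 * k) * erf (c * x) * exp (-x ^ 2))
      (k ! / (√π * (1 + c ^ 2) ^ (k + 1))) c := by
    intro c
    refine (hasDerivAt_integral_pow_mul_erf_mul_exp (2 * k) c).congr_deriv ?_
    rw [integral_pow_odd_mul_exp_neg_mul_sq (by positivity)]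
    field_simp
  refine congrFun (eq_of_fderiv_eq (𝕜 := ℝ) (fun c => (hderiv c).differentiableAt)
    (fun c => (hG c).differentiableAt) (fun c => ?_) 0 (by simp [hG₀])) c
  rw [(hderiv c).hasFDerivAt.fderiv, (hG c).hasFDerivAt.fderiv]

lemma integral_erf_mul_mul_exp_neg_sq (c : ℝ) :
    ∫ x in Ioi (0 : ℝ), erf (c * x) * exp (-x ^ 2) = arctan c / √π := by
  have hG (c : ℝ) : HasDerivAt (fun c => arctan c / √π) (0 ! / (√π * (1 + c ^ 2) ^ (0 + 1))) c :=
    ((hasDerivAt_arctan c).div_const √π).congr_deriv (by simp [div_eq_mul_inv, mul_comm])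
  simpa using integral_pow_mul_erf_mul_exp_eq_of_hasDerivAt 0 hG (by simp) c

lemma integral_sq_mul_erf_mul_mul_exp_neg_sq (c : ℝ) :
    ∫ x in Ioi (0 : ℝ), x ^ 2 * erf (c * x) * exp (-x ^ 2)
      = (arctan c + c / (1 + c ^ 2)) / (2 * √π) := by
  refine integral_pow_mul_erf_mul_exp_eq_of_hasDerivAt 1
    (G := fun c => (arctan c + c / (1 + c ^ 2)) / (2 * √π)) (fun c => ?_) (by simp) c
  have hden : HasDerivAt (fun c : ℝ => 1 + c ^ 2) (2 * c) c := by
    simpa using (hasDerivAt_pow 2 c).const_add 1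
  refine ((hasDerivAt_arctan c).add ((hasDerivAt_id c).div hden (by positivity))).div_const
    (2 * √π) |>.congr_deriv ?_
  simp only [id, one_mul, Nat.factorial_one, Nat.cast_one]
  field_simp
  ring

lemma integral_comp_abs_gaussianReal {σ : ℝ} (hσ : 0 < σ) (f : ℝ → ℝ) :
    ∫ x, f |x| ∂gaussianReal 0 ⟨σ ^ 2, sq_nonneg σ⟩
      = 2 / √π * ∫ y in Ioi (0 : ℝ), exp (-y ^ 2) * f (√2 * σ * y) := by
  set v : ℝ≥0 := ⟨σ ^ 2, sq_nonneg σ⟩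
  have hv : v ≠ 0 := by rw [ne_eq, ← NNReal.coe_eq_zero]; exact (pow_pos hσ 2).ne'
  have hk : 0 < √2 * σ := by positivity
  have hpdf (y : ℝ) : gaussianPDFReal 0 v (√2 * σ * y) = (√2 * √π * σ)⁻¹ * exp (-y ^ 2) := by
    change (√(2 * π * σ ^ 2))⁻¹ * exp (-(√2 * σ * y - 0) ^ 2 / (2 * σ ^ 2)) = _
    rw [sub_zero, sqrt_mul' _ (sq_nonneg σ), sqrt_sq hσ.le, sqrt_mul zero_le_two, mul_pow, mul_pow,
      sq_sqrt zero_le_two]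
    congr 2
    field_simp
  have hsubst := integral_comp_mul_left_Ioi (fun t => gaussianPDFReal 0 v t * f t) 0 hk
  simp only [mul_zero, smul_eq_mul] at hsubst
  calc ∫ x, f |x| ∂gaussianReal 0 v
      = ∫ x, (fun t => gaussianPDFReal 0 v t * f t) |x| := by
        rw [integral_gaussianReal_eq_integral_smul hv]
        simp [gaussianPDFReal]
    _ = 2 * ∫ t in Ioi (0 : ℝ), gaussianPDFReal 0 v t * f t :=
        integral_comp_abs (f := fun t => gaussianPDFReal 0 v t * f t)
    _ = 2 * ((√2 * σ) * ∫ y in Ioi (0 : ℝ), gaussianPDFReal 0 v (√2 * σ * y) * f (√2 * σ * y)) := by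
        rw [hsubst, mul_inv_cancel_left₀ hk.ne']
    _ = 2 / √π * ∫ y in Ioi (0 : ℝ), exp (-y ^ 2) * f (√2 * σ * y) := by
        simp_rw [hpdf, ← integral_const_mul]
        congr 1
        ext y
        field_simp

noncomputable def combinedIntegrand (t : ℝ) : ℝ :=
  1 / 2 * (t ^ 2 + 1) * erf (t / √2) + (t * exp (-t ^ 2 / 2) - 2 * t) / √(2 * π)

lemma exp_neg_sq_mul_combinedIntegrand (σ y : ℝ) :
    exp (-y ^ 2) * combinedIntegrand (√2 * σ * y)
      = σ ^ 2 * (y ^ 2 * erf (σ * y) * exp (-y ^ 2)) + 1 / 2 * (erf (σ * y) * exp (-y ^ 2))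
        + σ / √π * (y * exp (-(1 + σ ^ 2) * y ^ 2)) - 2 * σ / √π * (y * exp (-y ^ 2)) := by
  have h2 : √2 ^ 2 = 2 := sq_sqrt zero_le_two
  have h2σ : √2 * σ * y / √2 = σ * y := by field_simp
  rw [combinedIntegrand, sqrt_mul zero_le_two, h2σ,
    show -(1 + σ ^ 2) * y ^ 2 = -(√2 * σ * y) ^ 2 / 2 + -y ^ 2 by rw [mul_pow, mul_pow, h2]; ring,
    exp_add]
  field_simp
  rw [h2]
  ring

lemma integral_exp_neg_sq_mul_combinedIntegrand (σ : ℝ) :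
    ∫ y in Ioi (0 : ℝ), exp (-y ^ 2) * combinedIntegrand (√2 * σ * y)
      = ((σ ^ 2 + 1) * arctan σ - σ) / (2 * √π) := by
  have hint₁ := (integrableOn_pow_mul_erf_mul_exp 2 σ).const_mul (σ ^ 2)
  have hint₂ := (integrableOn_pow_mul_erf_mul_exp 0 σ).const_mul (1 / 2)
  have hint₃ :=
    (integrableOn_pow_mul_exp_neg_mul_sq (by positivity : 0 < 1 + σ ^ 2) 1).const_mul (σ / √π)
  have hint₄ := (integrableOn_pow_mul_exp_neg_sq 1).const_mul (2 * σ / √π)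
  simp only [pow_zero, one_mul, pow_one] at hint₂ hint₃ hint₄
  have hmoment : ∫ y in Ioi (0 : ℝ), y * exp (-y ^ 2) = 2⁻¹ := by
    simpa using integral_mul_exp_neg_mul_sq one_pos
  simp_rw [exp_neg_sq_mul_combinedIntegrand]
  rw [integral_sub ?_ hint₄, integral_add ?_ hint₃, integral_add hint₁ hint₂,
    integral_const_mul, integral_const_mul, integral_const_mul, integral_const_mul,
    integral_sq_mul_erf_mul_mul_exp_neg_sq, integral_erf_mul_mul_exp_neg_sq,
    integral_mul_exp_neg_mul_sq (by positivity), hmoment]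
  · field_simp
    ring
  exacts [hint₁.add hint₂, (hint₁.add hint₂).add hint₃]

theorem half_normal_combined_identity (σ : ℝ) (hσ : 0 < σ) :
    ∫ x, ((1 / 2) * (|x| ^ 2 + 1) * erf (|x| / Real.sqrt 2)
          + (|x| * Real.exp (-|x| ^ 2 / 2) - 2 * |x|) / Real.sqrt (2 * π))
        ∂(gaussianReal 0 ⟨σ ^ 2, sq_nonneg σ⟩)
      = (σ ^ 2 + 1) * Real.arctan σ / π - σ / π := by
  calc _ = ∫ x, combinedIntegrand |x| ∂gaussianReal 0 ⟨σ ^ 2, sq_nonneg σ⟩ := rfl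
    _ = 2 / √π * (((σ ^ 2 + 1) * arctan σ - σ) / (2 * √π)) := by
      rw [integral_comp_abs_gaussianReal hσ, integral_exp_neg_sq_mul_combinedIntegrand]
    _ = (σ ^ 2 + 1) * arctan σ / π - σ / π := by
      conv_rhs => rw [← mul_self_sqrt pi_pos.le]
      field_simp
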